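/- Let λ ∈ ℂ with |arg λ| ≤ ν < π/2. Then for all 0 < t ≤ s, |e^(−(s−t)λ)(1 − e^(−2tλ))| ≤ C t/s, with C depending only on ν. -/

import Mathlib

/-!
In the sector `|arg λ| ≤ ν` one has `Re λ ≥ c |λ|` with `c = cos ν > 0`. The first factor has
modulus `e^{-(s-t) Re λ} ≤ 1` and the second is bounded both by `2` and by `4 t |λ|`. When
`s ≤ 2t` the product is at most `2 ≤ 4 t/s`; when `s > 2t` we have `s - t ≥ s/2`, and
`x e^{-x} ≤ 1` applied to `x = s c |λ| / 2` trades the decay of the first factor for the growth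
`4 t |λ|` of the second, giving `8 t / (c s)`.
-/

open Complex

lemma Complex.cos_mul_norm_le_re {z : ℂ} {θ : ℝ} (hz : |z.arg| ≤ θ) (hθ : θ ≤ Real.pi) :
    Real.cos θ * ‖z‖ ≤ z.re := by
  have hcos : Real.cos θ ≤ Real.cos z.arg := by
    rw [← Real.cos_abs z.arg]
    exact Real.cos_le_cos_of_nonneg_of_le_pi (abs_nonneg _) hθ hz
  calc Real.cos θ * ‖z‖ ≤ Real.cos z.arg * ‖z‖ := by gcongr
    _ = z.re := by rw [mul_comm, norm_mul_cos_arg]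

lemma Complex.norm_exp_neg_le_one {w : ℂ} (hw : 0 ≤ w.re) : ‖exp (-w)‖ ≤ 1 := by
  rw [norm_exp, neg_re, Real.exp_le_one_iff]
  linarith

lemma Complex.norm_one_sub_exp_neg_le_two {w : ℂ} (hw : 0 ≤ w.re) : ‖1 - exp (-w)‖ ≤ 2 :=
  calc ‖1 - exp (-w)‖ ≤ ‖(1 : ℂ)‖ + ‖exp (-w)‖ := norm_sub_le _ _
    _ ≤ 1 + 1 := by rw [norm_one]; gcongr; exact norm_exp_neg_le_one hw
    _ = 2 := by norm_num

lemma Complex.norm_one_sub_exp_neg_le {w : ℂ} (hw : 0 ≤ w.re) : ‖1 - exp (-w)‖ ≤ 2 * ‖w‖ := by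
  rcases le_or_gt ‖w‖ 1 with hsmall | hlarge
  · rw [norm_sub_rev, ← norm_neg w]
    exact norm_exp_sub_one_le (by rwa [norm_neg])
  · linarith [norm_one_sub_exp_neg_le_two hw]

lemma Real.mul_exp_neg_le_one (x : ℝ) : x * Real.exp (-x) ≤ 1 :=
  (mul_exp_neg_le_exp_neg_one x).trans (Real.exp_le_one_iff.2 (by norm_num))

lemma Complex.norm_exp_neg_mul_one_sub_exp_neg_le {c : ℝ} (hc : 0 < c) (hc1 : c ≤ 1)
    {lam : ℂ} (hlam : c * ‖lam‖ ≤ lam.re) {t s : ℝ} (ht : 0 < t) (hts : t ≤ s) :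
    ‖exp (-(((s : ℂ) - t) * lam)) * (1 - exp (-(2 * (t : ℂ) * lam)))‖ ≤ 8 / c * (t / s) := by
  have hs : 0 < s := ht.trans_le hts
  have hre : 0 ≤ lam.re := (by positivity : 0 ≤ c * ‖lam‖).trans hlam
  set A := ‖exp (-(((s : ℂ) - t) * lam))‖
  set B := ‖1 - exp (-(2 * (t : ℂ) * lam))‖
  have hA : A = Real.exp (-((s - t) * lam.re)) := by
    simp [A, norm_exp, mul_re]
  have hw : 0 ≤ (2 * (t : ℂ) * lam).re := by
    simpa [mul_re] using mul_nonneg (mul_nonneg zero_le_two ht.le) hre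
  have hB0 : 0 ≤ B := norm_nonneg _
  have hB2 : B ≤ 2 := norm_one_sub_exp_neg_le_two hw
  have hBlin : B ≤ 4 * t * ‖lam‖ := by
    have := norm_one_sub_exp_neg_le hw
    rw [norm_mul, norm_mul, norm_real, Real.norm_of_nonneg ht.le, RCLike.norm_ofNat] at this
    linarith
  rw [norm_mul]
  rcases le_or_gt s (2 * t) with hclose | hfar
  · have hA1 : A ≤ 1 := by
      rw [hA, Real.exp_le_one_iff]; nlinarith
    have hts2 : 1 / 2 ≤ t / s := by rw [div_le_div_iff₀ two_pos hs]; linarith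
    have h8c : 8 ≤ 8 / c := by rw [le_div_iff₀ hc]; nlinarith
    calc A * B ≤ 1 * 2 := mul_le_mul hA1 hB2 hB0 zero_le_one
      _ ≤ 8 / c * (t / s) := by nlinarith
  · set x := s / 2 * (c * ‖lam‖)
    have hAx : A ≤ Real.exp (-x) := by
      rw [hA, Real.exp_le_exp, neg_le_neg_iff]
      calc x ≤ (s - t) * (c * ‖lam‖) :=
            mul_le_mul_of_nonneg_right (by linarith) (by positivity)
        _ ≤ (s - t) * lam.re := by gcongr
    have hxA : x * A ≤ 1 :=
      (mul_le_mul_of_nonneg_left hAx (by positivity)).trans (Real.mul_exp_neg_le_one x)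
    have key : A * B * (c * s) ≤ 8 * t := by
      calc A * B * (c * s) ≤ A * (4 * t * ‖lam‖) * (c * s) := by gcongr
        _ = 8 * t * (x * A) := by ring
        _ ≤ 8 * t * 1 := by gcongr
        _ = 8 * t := mul_one _
    rw [div_mul_div_comm, le_div_iff₀ (by positivity)]
    linarith

/-- For `λ` in the sector `|arg λ| ≤ ν < π/2` and `0 < t ≤ s`,
`|e^(−(s−t)λ)(1 − e^(−2tλ))| ≤ C t/s` with `C` depending only on `ν`. -/
theorem stmt_7 (ν : ℝ) (hν : ν < Real.pi / 2) :
    ∃ C : ℝ, 0 < C ∧ ∀ lam : ℂ, |lam.arg| ≤ ν → ∀ t s : ℝ, 0 < t → t ≤ s →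
      ‖Complex.exp (-(((s : ℂ) - (t : ℂ)) * lam)) *
          (1 - Complex.exp (-(2 * (t : ℂ) * lam)))‖ ≤ C * (t / s) := by
  set θ := max ν 0
  have hc : 0 < Real.cos θ :=
    Real.cos_pos_of_mem_Ioo ⟨by linarith [Real.pi_pos, le_max_right ν 0],
      max_lt hν (by linarith [Real.pi_pos])⟩
  refine ⟨8 / Real.cos θ, by positivity, fun lam harg t s ht hts => ?_⟩
  have hθ : θ ≤ Real.pi := max_le (by linarith [Real.pi_pos]) Real.pi_pos.le
  exact norm_exp_neg_mul_one_sub_exp_neg_le hc (Real.cos_le_one θ)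
    (cos_mul_norm_le_re (harg.trans (le_max_left ν 0)) hθ) ht hts
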